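/- arXiv:1608.00624 — 2 statements merged into one kernel-verified Lean document; each statement's English description precedes it below -/
import Mathlib

section
/- Fix constants c₁,…,c_k ∈ (0,∞). Assume Y ≠ 0 and ‖(X Pⱼ Nⱼ)ᵀ ε‖_{qⱼ}* > 0 for every j ∈ {1,…,k}. Then there exists a tuning parameter λ ∈ (0,∞)^k such that for every (equivalently, some) minimizer β̂^λ of the objective, λⱼ / (2 g′(‖Y − Xβ̂^λ‖₂²)) = cⱼ · ‖(X Pⱼ Nⱼ)ᵀ ε‖_{qⱼ}* for all j ∈ {1,…,k}. -/
open Matrix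
open scoped BigOperators ENNReal Classical

/-- Squared Euclidean norm of a vector. -/
noncomputable def sqNorm {n : ℕ} (v : Fin n → ℝ) : ℝ := ∑ i, (v i) ^ 2

/-- The ℓ_q norm on ℝ^p for an exponent q ∈ [1,∞] (given as an `ℝ≥0∞`). -/
noncomputable def lqNorm {p : ℕ} (q : ℝ≥0∞) (v : Fin p → ℝ) : ℝ :=
  if q = ∞ then ⨆ i, |v i| else (∑ i, |v i| ^ q.toReal) ^ (1 / q.toReal)

/-- The conjugate (dual) exponent of q ∈ [1,∞]. -/
noncomputable def dualExp (q : ℝ≥0∞) : ℝ≥0∞ :=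
  if q = 1 then ∞ else if q = ∞ then 1 else q / (q - 1)

/-- The dual norm of the ℓ_q norm: the ℓ norm with conjugate exponent. -/
noncomputable def lqDualNorm {p : ℕ} (q : ℝ≥0∞) (v : Fin p → ℝ) : ℝ :=
  lqNorm (dualExp q) v

/-- The penalized objective function
`β ↦ g(‖Y − Xβ‖₂²) + Σ_j λ_j ‖M_j β‖_{q_j}`. -/
noncomputable def objFn {n p k : ℕ} (g : ℝ → ℝ) (Y : Fin n → ℝ)
    (X : Matrix (Fin n) (Fin p) ℝ) (M : Fin k → Matrix (Fin p) (Fin p) ℝ)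
    (q : Fin k → ℝ≥0∞) (lam : Fin k → ℝ) (β : Fin p → ℝ) : ℝ :=
  g (sqNorm (Y - X.mulVec β)) + ∑ j, lam j * lqNorm (q j) ((M j).mulVec β)

section auxLemmas

variable {m P : ℕ}

lemma sqNorm_nonneg' (v : Fin m → ℝ) : 0 ≤ sqNorm v :=
  Finset.sum_nonneg fun _ _ => sq_nonneg _

lemma sqNorm_eq_zero' {v : Fin m → ℝ} (h : sqNorm v = 0) : v = 0 := by
  funext i
  have h1 := (Finset.sum_eq_zero_iff_of_nonneg (fun i _ => sq_nonneg (v i))).mp h i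
    (Finset.mem_univ i)
  have := pow_eq_zero_iff (two_ne_zero) |>.mp h1
  simpa using this

lemma sqNorm_pos' {v : Fin m → ℝ} (h : v ≠ 0) : 0 < sqNorm v :=
  lt_of_le_of_ne (sqNorm_nonneg' v) fun e => h (sqNorm_eq_zero' e.symm)

lemma continuous_sqNorm : Continuous (sqNorm (n := m)) :=
  continuous_finset_sum _ fun i _ => (continuous_apply i).pow 2

lemma one_le_toReal {q : ℝ≥0∞} (hq : 1 ≤ q) (hq' : q ≠ ∞) : 1 ≤ q.toReal := by
  rw [show (1:ℝ) = (1:ℝ≥0∞).toReal by simp]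
  exact ENNReal.toReal_mono hq' hq

lemma lqNorm_nonneg' (q : ℝ≥0∞) (v : Fin P → ℝ) : 0 ≤ lqNorm q v := by
  unfold lqNorm; split
  · exact Real.iSup_nonneg fun i => abs_nonneg _
  · positivity

lemma lqNorm_pos' {q : ℝ≥0∞} (hq : 1 ≤ q) {v : Fin P → ℝ} (hv : v ≠ 0) :
    0 < lqNorm q v := by
  obtain ⟨i, hi⟩ : ∃ i, v i ≠ 0 := by
    by_contra hc; push_neg at hc; exact hv (funext hc)
  unfold lqNorm; split_ifs with h
  · have hle : |v i| ≤ ⨆ i, |v i| :=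
      le_ciSup (f := fun i => |v i|) (Set.Finite.bddAbove (Set.finite_range _)) i
    exact lt_of_lt_of_le (abs_pos.mpr hi) hle
  · have ht : 1 ≤ q.toReal := one_le_toReal hq h
    have ht0 : (0:ℝ) < q.toReal := lt_of_lt_of_le one_pos ht
    have hsum : 0 < ∑ j, |v j| ^ q.toReal := by
      apply Finset.sum_pos' (fun j _ => Real.rpow_nonneg (abs_nonneg _) _)
      exact ⟨i, Finset.mem_univ i, Real.rpow_pos_of_pos (abs_pos.mpr hi) _⟩
    exact Real.rpow_pos_of_pos hsum _

lemma lqNorm_smul' {q : ℝ≥0∞} (hq : 1 ≤ q) {s : ℝ} (hs : 0 ≤ s) (v : Fin P → ℝ) :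
    lqNorm q (s • v) = s * lqNorm q v := by
  unfold lqNorm; split_ifs with h
  · rcases isEmpty_or_nonempty (Fin P) with he | hne
    · simp [Real.iSup_of_isEmpty]
    · have : ∀ i, |(s • v) i| = s * |v i| := fun i => by
        simp [abs_mul, abs_of_nonneg hs]
      simp only [this]
      exact (Real.mul_iSup_of_nonneg hs fun i => |v i|).symm
  · have ht : 1 ≤ q.toReal := one_le_toReal hq h
    have ht0 : (0:ℝ) < q.toReal := lt_of_lt_of_le one_pos ht
    have h1 : ∀ i : Fin P, |(s • v) i| ^ q.toReal = s ^ q.toReal * |v i| ^ q.toReal := by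
      intro i
      rw [Pi.smul_apply, smul_eq_mul, abs_mul, abs_of_nonneg hs,
        Real.mul_rpow hs (abs_nonneg _)]
    simp only [h1, ← Finset.mul_sum]
    rw [Real.mul_rpow (Real.rpow_nonneg hs _)
      (Finset.sum_nonneg fun i _ => Real.rpow_nonneg (abs_nonneg _) _),
      ← Real.rpow_mul hs, mul_one_div, div_self ht0.ne', Real.rpow_one]

lemma lqNorm_add_le' {q : ℝ≥0∞} (hq : 1 ≤ q) (u v : Fin P → ℝ) :
    lqNorm q (u + v) ≤ lqNorm q u + lqNorm q v := by
  unfold lqNorm; split_ifs with h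
  · rcases isEmpty_or_nonempty (Fin P) with he | hne
    · simp [Real.iSup_of_isEmpty]
    · refine ciSup_le fun i => (abs_add_le (u i) (v i)).trans (add_le_add ?_ ?_)
      · exact le_ciSup (f := fun i => |u i|) (Set.Finite.bddAbove (Set.finite_range _)) i
      · exact le_ciSup (f := fun i => |v i|) (Set.Finite.bddAbove (Set.finite_range _)) i
  · exact Real.Lp_add_le Finset.univ u v (one_le_toReal hq h)

lemma lqNorm_le_const_mul_norm {q : ℝ≥0∞} (hq : 1 ≤ q) (v : Fin P → ℝ) :
    lqNorm q v ≤ ((P : ℝ) + 1) * ‖v‖ := by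
  have hvn : ∀ i, |v i| ≤ ‖v‖ := fun i => by
    simpa [Real.norm_eq_abs] using norm_le_pi_norm v i
  have hn0 : (0:ℝ) ≤ ‖v‖ := norm_nonneg v
  have hP1 : (1:ℝ) ≤ (P:ℝ) + 1 := by
    have : (0:ℝ) ≤ (P:ℝ) := Nat.cast_nonneg P
    linarith
  unfold lqNorm; split_ifs with h
  · rcases isEmpty_or_nonempty (Fin P) with he | hne
    · simp only [Real.iSup_of_isEmpty]; positivity
    · exact ciSup_le fun i => (hvn i).trans (le_mul_of_one_le_left hn0 hP1)
  · have ht : 1 ≤ q.toReal := one_le_toReal hq h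
    have ht0 : (0:ℝ) < q.toReal := lt_of_lt_of_le one_pos ht
    calc (∑ i, |v i| ^ q.toReal) ^ (1/q.toReal)
        ≤ (∑ _i : Fin P, ‖v‖ ^ q.toReal) ^ (1/q.toReal) := by
          apply Real.rpow_le_rpow
            (Finset.sum_nonneg fun i _ => Real.rpow_nonneg (abs_nonneg _) _)
            (Finset.sum_le_sum fun i _ =>
              Real.rpow_le_rpow (abs_nonneg _) (hvn i) ht0.le)
            (by positivity)
      _ = ((P:ℝ) * ‖v‖ ^ q.toReal) ^ (1/q.toReal) := by
          simp [Finset.sum_const, Finset.card_univ, nsmul_eq_mul]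
      _ ≤ ((P:ℝ)+1) * ‖v‖ := by
          rw [Real.mul_rpow (by positivity) (by positivity)]
          have hxx : (‖v‖ ^ q.toReal) ^ (1/q.toReal) = ‖v‖ := by
            rw [← Real.rpow_mul hn0, mul_one_div, div_self ht0.ne', Real.rpow_one]
          rw [hxx]
          refine mul_le_mul_of_nonneg_right ?_ hn0
          rcases Nat.eq_zero_or_pos P with h0 | hpos
          · subst h0
            rw [Nat.cast_zero, one_div, Real.zero_rpow (inv_ne_zero ht0.ne')]
            norm_num
          · have h1P : (1:ℝ) ≤ (P:ℝ) := by exact_mod_cast hpos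
            calc (P:ℝ) ^ (1/q.toReal) ≤ (P:ℝ) ^ (1:ℝ) :=
                  Real.rpow_le_rpow_of_exponent_le h1P (by rw [div_le_one ht0]; exact ht)
              _ = (P:ℝ) := Real.rpow_one _
              _ ≤ (P:ℝ) + 1 := by linarith

lemma continuous_lqNorm {q : ℝ≥0∞} (hq : 1 ≤ q) :
    Continuous (lqNorm q : (Fin P → ℝ) → ℝ) := by
  have key : ∀ u v : Fin P → ℝ, lqNorm q u - lqNorm q v ≤ ((P:ℝ)+1) * ‖u - v‖ := by
    intro u v
    have h1 : lqNorm q u ≤ lqNorm q (u - v) + lqNorm q v := by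
      have := lqNorm_add_le' hq (u - v) v
      simpa [sub_add_cancel] using this
    have h2 := lqNorm_le_const_mul_norm hq (u - v)
    linarith
  have hlip : LipschitzWith (⟨(P:ℝ)+1, by positivity⟩ : NNReal) (lqNorm q : (Fin P → ℝ) → ℝ) := by
    apply LipschitzWith.of_dist_le_mul
    intro u v
    rw [Real.dist_eq, dist_eq_norm, abs_sub_le_iff]
    constructor
    · exact key u v
    · have := key v u
      rwa [norm_sub_rev] at this
  exact hlip.continuous

lemma continuous_mulVec {a b : ℕ} (A : Matrix (Fin a) (Fin b) ℝ) :
    Continuous (A.mulVec) := by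
  have := LinearMap.continuous_of_finiteDimensional (A.mulVecLin)
  exact this.congr fun v => by simp [Matrix.mulVecLin_apply]

end auxLemmas

lemma sqNorm_sub_smul {m : ℕ} (r w : Fin m → ℝ) (s : ℝ) :
    sqNorm (r - s • w) = sqNorm r + s * ((-2) * (∑ i, r i * w i) + s * sqNorm w) := by
  unfold sqNorm
  have h1 : ∀ i : Fin m, (r - s • w) i ^ 2
      = r i ^ 2 + ((-2) * (s * (r i * w i)) + s ^ 2 * w i ^ 2) := by
    intro i
    simp only [Pi.sub_apply, Pi.smul_apply, smul_eq_mul]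
    ring
  rw [Finset.sum_congr rfl fun i _ => h1 i, Finset.sum_add_distrib,
    Finset.sum_add_distrib, ← Finset.mul_sum, ← Finset.mul_sum, ← Finset.mul_sum]
  ring

set_option maxHeartbeats 2000000 in
/-- Lemma (existence of tuning parameters): given constants `c_j > 0`, if `Y ≠ 0` and the
dual norms `‖(X P_j N_j)ᵀ ε‖_{q_j}*` are positive, then there exists a tuning parameter
`λ ∈ (0,∞)^k` (with a minimizer existing) such that for every minimizer `β̂^λ`,
`λ_j / (2 g′(‖Y − Xβ̂^λ‖₂²)) = c_j ‖(X P_j N_j)ᵀ ε‖_{q_j}*` for all j. -/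
theorem existence_of_tuning_parameter
    {n p k : ℕ}
    (Y ε : Fin n → ℝ) (X : Matrix (Fin n) (Fin p) ℝ) (βstar : Fin p → ℝ)
    (hmodel : Y = X.mulVec βstar + ε)
    (g : ℝ → ℝ) (hg0 : g 0 = 0)
    (hgcont : ContinuousOn g (Set.Ici 0))
    (hgmono : StrictMonoOn g (Set.Ici 0))
    (hgconv : StrictConvexOn ℝ (Set.univ : Set (Fin n → ℝ)) (fun a => g (sqNorm a)))
    (g' : ℝ → ℝ)
    (hgderiv : ∀ x ∈ Set.Ioi (0:ℝ), HasDerivAt g (g' x) x)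
    (hg'cont : ContinuousOn g' (Set.Ioi 0))
    (hg'pos : ∀ x ∈ Set.Ioi (0:ℝ), 0 < g' x)
    (hg'anti : AntitoneOn g' (Set.Ioi 0))
    (M : Fin k → Matrix (Fin p) (Fin p) ℝ)
    (hker : ∀ v : Fin p → ℝ, (∀ j, (M j).mulVec v = 0) → v = 0)
    (q : Fin k → ℝ≥0∞) (hq : ∀ j, 1 ≤ q j)
    (N Pmat : Fin k → Matrix (Fin p) (Fin p) ℝ)
    (hPN : ∑ j, Pmat j * N j * M j = (1 : Matrix (Fin p) (Fin p) ℝ))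
    (c : Fin k → ℝ) (hc : ∀ j, 0 < c j)
    (hY : Y ≠ 0)
    (hε : ∀ j, 0 < lqDualNorm (q j) ((X * Pmat j * N j)ᵀ.mulVec ε)) :
    ∃ lam : Fin k → ℝ, (∀ j, 0 < lam j) ∧
      (∃ b : Fin p → ℝ, ∀ β : Fin p → ℝ, objFn g Y X M q lam b ≤ objFn g Y X M q lam β) ∧
      ∀ βhat : Fin p → ℝ,
        (∀ β : Fin p → ℝ, objFn g Y X M q lam βhat ≤ objFn g Y X M q lam β) →
        ∀ j, lam j / (2 * g' (sqNorm (Y - X.mulVec βhat)))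
          = c j * lqDualNorm (q j) ((X * Pmat j * N j)ᵀ.mulVec ε) := by
  classical
  -- basic data
  set D : Fin k → ℝ := fun j => lqDualNorm (q j) ((X * Pmat j * N j)ᵀ.mulVec ε) with hD
  have hDpos : ∀ j, 0 < D j := hε
  have hcoef : ∀ j, 0 ≤ 2 * c j * D j := fun j =>
    mul_nonneg (mul_nonneg (by norm_num) (hc j).le) (hDpos j).le
  set pen : (Fin p → ℝ) → ℝ :=
    fun β => ∑ j, (2 * c j * D j) * lqNorm (q j) ((M j).mulVec β) with hpen
  set Sq : (Fin p → ℝ) → ℝ := fun β => sqNorm (Y - X.mulVec β) with hSq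
  set K : (Fin p → ℝ) → ℝ := fun β => Sq β + pen β with hKdef
  have hpen_nonneg : ∀ β, 0 ≤ pen β := fun β =>
    Finset.sum_nonneg fun j _ => mul_nonneg (hcoef j) (lqNorm_nonneg' _ _)
  have hpen_zero : ∀ β, pen β = 0 → β = 0 := by
    intro β hz
    apply hker
    intro j
    by_contra hMj
    have hterm : 0 < (2 * c j * D j) * lqNorm (q j) ((M j).mulVec β) := by
      have h1 : 0 < 2 * c j * D j := by
        have := hc j; have := hDpos j; positivity
      exact mul_pos h1 (lqNorm_pos' (hq j) hMj)
    have hsum : 0 < pen β := by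
      rw [hpen]
      exact Finset.sum_pos' (fun i _ => mul_nonneg (hcoef i) (lqNorm_nonneg' _ _))
        ⟨j, Finset.mem_univ j, hterm⟩
    rw [hz] at hsum
    exact lt_irrefl 0 hsum
  have hpen_smul : ∀ (s:ℝ), 0 ≤ s → ∀ β, pen (s • β) = s * pen β := by
    intro s hs β
    rw [hpen, Finset.mul_sum]
    refine Finset.sum_congr rfl fun j _ => ?_
    rw [Matrix.mulVec_smul, lqNorm_smul' (hq j) hs]
    ring
  have hpen_cont : Continuous pen := by
    rw [hpen]
    exact continuous_finset_sum _ fun j _ =>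
      continuous_const.mul ((continuous_lqNorm (hq j)).comp (continuous_mulVec _))
  have hSq_cont : Continuous Sq := by
    rw [hSq]
    exact continuous_sqNorm.comp (continuous_const.sub (continuous_mulVec X))
  have hSq_nonneg : ∀ β, 0 ≤ Sq β := fun β => sqNorm_nonneg' _
  have hK_cont : Continuous K := hSq_cont.add hpen_cont
  -- penalty convexity combo
  have hpen_combo : ∀ (a b : ℝ), 0 ≤ a → 0 ≤ b → ∀ x y,
      pen (a • x + b • y) ≤ a * pen x + b * pen y := by
    intro a b ha hb x y
    have hterm : ∀ j, lqNorm (q j) ((M j).mulVec (a • x + b • y)) ≤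
        a * lqNorm (q j) ((M j).mulVec x) + b * lqNorm (q j) ((M j).mulVec y) := by
      intro j
      rw [Matrix.mulVec_add, Matrix.mulVec_smul, Matrix.mulVec_smul]
      calc lqNorm (q j) (a • (M j).mulVec x + b • (M j).mulVec y)
          ≤ lqNorm (q j) (a • (M j).mulVec x) + lqNorm (q j) (b • (M j).mulVec y) :=
            lqNorm_add_le' (hq j) _ _
        _ = a * lqNorm (q j) ((M j).mulVec x) + b * lqNorm (q j) ((M j).mulVec y) := by
            rw [lqNorm_smul' (hq j) ha, lqNorm_smul' (hq j) hb]
    calc pen (a • x + b • y)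
        ≤ ∑ j, (2 * c j * D j) *
            (a * lqNorm (q j) ((M j).mulVec x) + b * lqNorm (q j) ((M j).mulVec y)) :=
          Finset.sum_le_sum fun j _ => mul_le_mul_of_nonneg_left (hterm j) (hcoef j)
      _ = a * pen x + b * pen y := by
          rw [hpen, Finset.mul_sum, Finset.mul_sum, ← Finset.sum_add_distrib]
          exact Finset.sum_congr rfl fun j _ => by ring
  -- residual convex combination identity
  have hres_combo : ∀ (a b : ℝ), a + b = 1 → ∀ x y : Fin p → ℝ,
      Y - X.mulVec (a • x + b • y)
        = a • (Y - X.mulVec x) + b • (Y - X.mulVec y) := by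
    intro a b hab x y
    funext i
    rw [Matrix.mulVec_add, Matrix.mulVec_smul, Matrix.mulVec_smul]
    simp only [Pi.add_apply, Pi.sub_apply, Pi.smul_apply, smul_eq_mul]
    have ha1 : a = 1 - b := by linarith
    rw [ha1]; ring
  -- existence of a K-minimizer
  have hKmin : ∃ bh, ∀ β, K bh ≤ K β := by
    rcases subsingleton_or_nontrivial (Fin p → ℝ) with hsub | hnt
    · exact ⟨0, fun β => by rw [Subsingleton.elim β 0]⟩
    · obtain ⟨u0, hu0mem, hu0min⟩ := (isCompact_sphere (0 : Fin p → ℝ) 1).exists_isMinOn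
        (NormedSpace.sphere_nonempty.mpr zero_le_one) hpen_cont.continuousOn
      have hu0norm : ‖u0‖ = 1 := by simpa using hu0mem
      have hu0 : u0 ≠ 0 := by
        intro hzero; rw [hzero] at hu0norm; simp at hu0norm
      have hm : 0 < pen u0 :=
        (hpen_nonneg u0).lt_of_ne fun hzero => hu0 (hpen_zero u0 hzero.symm)
      obtain ⟨mc, hmc⟩ : ∃ x : ℝ, x = pen u0 := ⟨_, rfl⟩
      have hm' : 0 < mc := by rw [hmc]; exact hm
      have hlow : ∀ β, mc * ‖β‖ ≤ K β := by
        intro β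
        rcases eq_or_ne β 0 with rfl | hb
        · simp only [norm_zero, mul_zero, hKdef]
          exact add_nonneg (hSq_nonneg 0) (hpen_nonneg 0)
        · have hnormpos : 0 < ‖β‖ := norm_pos_iff.mpr hb
          have hsphere : ‖β‖⁻¹ • β ∈ Metric.sphere (0 : Fin p → ℝ) 1 := by
            simp [norm_smul, abs_of_nonneg (inv_nonneg.mpr hnormpos.le),
              inv_mul_cancel₀ hnormpos.ne']
          have hmin : mc ≤ pen (‖β‖⁻¹ • β) := by rw [hmc]; exact hu0min hsphere
          have hdecomp : pen β = ‖β‖ * pen (‖β‖⁻¹ • β) := by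
            rw [← hpen_smul ‖β‖ hnormpos.le, smul_smul, mul_inv_cancel₀ hnormpos.ne', one_smul]
          have h1 : mc * ‖β‖ ≤ pen β := by
            rw [hdecomp]
            calc mc * ‖β‖ ≤ pen (‖β‖⁻¹ • β) * ‖β‖ :=
                  mul_le_mul_of_nonneg_right hmin hnormpos.le
              _ = ‖β‖ * pen (‖β‖⁻¹ • β) := mul_comm _ _
          calc mc * ‖β‖ ≤ pen β := h1
            _ ≤ K β := le_add_of_nonneg_left (hSq_nonneg β)
      set ρ := (K 0 + 1) / mc with hρ
      have hK0 : 0 ≤ K 0 := add_nonneg (hSq_nonneg 0) (hpen_nonneg 0)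
      have hρpos : 0 < ρ := div_pos (by linarith) hm'
      obtain ⟨b, hbmem, hbmin⟩ :=
        (isCompact_closedBall (0 : Fin p → ℝ) ρ).exists_isMinOn
          ⟨0, by simp [hρpos.le]⟩ hK_cont.continuousOn
      refine ⟨b, fun β => ?_⟩
      by_cases hβ : β ∈ Metric.closedBall (0 : Fin p → ℝ) ρ
      · exact hbmin hβ
      · have hβn : ρ < ‖β‖ := by
          simpa [Metric.mem_closedBall, dist_zero_right, not_le] using hβ
        have h2 : K b ≤ K 0 := hbmin (by simp [hρpos.le])
        have h1 : K 0 + 1 ≤ K β := by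
          have e1 : mc * ρ = K 0 + 1 := by
            rw [hρ, mul_comm]; exact div_mul_cancel₀ _ hm'.ne'
          calc K 0 + 1 = mc * ρ := e1.symm
            _ ≤ mc * ‖β‖ := mul_le_mul_of_nonneg_left hβn.le hm'.le
            _ ≤ K β := hlow β
        linarith
  obtain ⟨bh, hbh⟩ := hKmin
  -- the residual at bh is positive
  have hRpos : 0 < Sq bh := by
    rcases (hSq_nonneg bh).lt_or_eq with hlt | heq
    · exact hlt
    exfalso
    have hres0 : Y - X.mulVec bh = 0 := sqNorm_eq_zero' heq.symm
    have hXbh : X.mulVec bh = Y := by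
      have := sub_eq_zero.mp hres0; exact this.symm
    have hYpos : 0 < sqNorm Y := sqNorm_pos' hY
    have hpb : pen bh ≤ 0 := by
      by_contra hpos
      push_neg at hpos
      set s : ℝ := min 1 (pen bh / (2 * (sqNorm Y + 1))) with hs
      have hspos : 0 < s := by
        apply lt_min one_pos
        apply div_pos hpos
        linarith
      have hs1 : s ≤ 1 := min_le_left _ _
      have hineq := hbh ((1 - s) • bh)
      have hres1 : Y - X.mulVec ((1 - s) • bh) = s • Y := by
        rw [Matrix.mulVec_smul, hXbh]
        funext i
        simp only [Pi.sub_apply, Pi.smul_apply, smul_eq_mul]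
        ring
      have hSq1 : Sq ((1 - s) • bh) = s ^ 2 * sqNorm Y := by
        rw [hSq]
        simp only
        rw [hres1]
        unfold sqNorm
        rw [Finset.mul_sum]
        exact Finset.sum_congr rfl fun i _ => by
          simp only [Pi.smul_apply, smul_eq_mul]; ring
      have hpen1 : pen ((1 - s) • bh) = (1 - s) * pen bh :=
        hpen_smul (1 - s) (by linarith) bh
      have hSqbh : Sq bh = 0 := heq.symm
      have hKbh : K bh = pen bh := by rw [hKdef]; simp only; rw [hSqbh]; ring
      have hK1 : K ((1 - s) • bh) = s ^ 2 * sqNorm Y + (1 - s) * pen bh := by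
        rw [hKdef]; simp only; rw [hSq1, hpen1]
      rw [hKbh, hK1] at hineq
      have hstep : pen bh ≤ s * sqNorm Y := by
        have h2 : s * pen bh ≤ s ^ 2 * sqNorm Y := by nlinarith
        have h3 : s * pen bh ≤ s * (s * sqNorm Y) := by nlinarith
        exact le_of_mul_le_mul_left (by linarith [h3]) hspos
      have hsmall : s * sqNorm Y < pen bh := by
        have hsle : s ≤ pen bh / (2 * (sqNorm Y + 1)) := min_le_right _ _
        have h4 : s * sqNorm Y ≤ pen bh / (2 * (sqNorm Y + 1)) * sqNorm Y :=
          mul_le_mul_of_nonneg_right hsle hYpos.le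
        have h5 : pen bh / (2 * (sqNorm Y + 1)) * sqNorm Y < pen bh := by
          rw [div_mul_eq_mul_div, div_lt_iff₀ (by linarith)]
          nlinarith
        linarith
      linarith
    have hpb0 : pen bh = 0 := le_antisymm hpb (hpen_nonneg bh)
    have : bh = 0 := hpen_zero bh hpb0
    rw [this] at hXbh
    rw [Matrix.mulVec_zero] at hXbh
    exact hY hXbh.symm
  -- tuning parameter
  obtain ⟨gp, hgpdef⟩ : ∃ x, x = g' (Sq bh) := ⟨_, rfl⟩
  have hgppos : 0 < gp := by rw [hgpdef]; exact hg'pos (Sq bh) hRpos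
  set lam : Fin k → ℝ := fun j => gp * (2 * c j * D j) with hlam
  have hlampos : ∀ j, 0 < lam j := fun j => by
    have h1 : 0 < 2 * c j * D j := by
      have := hc j; have := hDpos j; positivity
    exact mul_pos hgppos h1
  have hobj : ∀ β, objFn g Y X M q lam β = g (Sq β) + gp * pen β := by
    intro β
    unfold objFn
    have h1 : ∑ j, lam j * lqNorm (q j) ((M j).mulVec β) = gp * pen β := by
      rw [hpen, Finset.mul_sum]
      refine Finset.sum_congr rfl fun j _ => ?_
      simp only [hlam]; ring
    rw [h1]
  -- bh minimizes the objective
  have hmin_obj : ∀ β, objFn g Y X M q lam bh ≤ objFn g Y X M q lam β := by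
    intro β
    rw [hobj, hobj]
    by_contra hlt
    push_neg at hlt
    obtain ⟨γ, hγ⟩ : ∃ x : ℝ, x = (g (Sq bh) + gp * pen bh) - (g (Sq β) + gp * pen β) := ⟨_, rfl⟩
    have hγpos : 0 < γ := by rw [hγ]; exact sub_pos.mpr hlt
    obtain ⟨h, hh⟩ : ∃ x : Fin p → ℝ, x = β - bh := ⟨_, rfl⟩
    obtain ⟨w, hw⟩ : ∃ x : Fin n → ℝ, x = X.mulVec h := ⟨_, rfl⟩
    obtain ⟨A, hA⟩ : ∃ x : ℝ, x = (-2) * (∑ i, (Y - X.mulVec bh) i * w i) := ⟨_, rfl⟩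
    obtain ⟨B, hB⟩ : ∃ x : ℝ, x = sqNorm w := ⟨_, rfl⟩
    have hSs : ∀ s : ℝ, Sq (bh + s • h) = Sq bh + s * (A + s * B) := by
      intro s
      have hres : Y - X.mulVec (bh + s • h) = (Y - X.mulVec bh) - s • w := by
        rw [hw, Matrix.mulVec_add, Matrix.mulVec_smul]
        abel
      simp only [hSq]
      rw [hres, sqNorm_sub_smul, hA, hB, hw]
    have hpen_ge : ∀ s : ℝ, pen bh - s * (A + s * B) ≤ pen (bh + s • h) := by
      intro s
      have h1 := hbh (bh + s • h)
      simp only [hKdef] at h1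
      rw [hSs s] at h1
      linarith
    have hcomb : ∀ s : ℝ, 0 ≤ s → s ≤ 1 →
        g (Sq (bh + s • h)) + gp * pen (bh + s • h) ≤
          (1 - s) * (g (Sq bh) + gp * pen bh) + s * (g (Sq β) + gp * pen β) := by
      intro s hs hs1
      have hplug : bh + s • h = (1 - s) • bh + s • β := by
        funext i
        simp only [hh, Pi.add_apply, Pi.smul_apply, Pi.sub_apply, smul_eq_mul]
        ring
      have hcv := hgconv.convexOn.2 (Set.mem_univ (Y - X.mulVec bh))
        (Set.mem_univ (Y - X.mulVec β)) (by linarith : (0:ℝ) ≤ 1 - s) hs (by ring)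
      rw [← hres_combo (1-s) s (by ring) bh β] at hcv
      have hg1 : g (Sq ((1 - s) • bh + s • β)) ≤ (1 - s) * g (Sq bh) + s * g (Sq β) := by
        simp only [hSq]
        simpa only [smul_eq_mul] using hcv
      have hg2 : pen ((1 - s) • bh + s • β) ≤ (1 - s) * pen bh + s * pen β :=
        hpen_combo (1-s) s (by linarith) hs bh β
      have hg3 : gp * pen ((1 - s) • bh + s • β) ≤ gp * ((1 - s) * pen bh + s * pen β) :=
        mul_le_mul_of_nonneg_left hg2 hgppos.le
      rw [hplug]
      calc g (Sq ((1-s) • bh + s • β)) + gp * pen ((1-s) • bh + s • β)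
          ≤ ((1 - s) * g (Sq bh) + s * g (Sq β)) + gp * ((1 - s) * pen bh + s * pen β) :=
            add_le_add hg1 hg3
        _ = (1 - s) * (g (Sq bh) + gp * pen bh) + s * (g (Sq β) + gp * pen β) := by ring
    have hkey : ∀ s : ℝ, 0 < s → s ≤ 1 →
        g (Sq bh + s * (A + s * B)) - g (Sq bh) - gp * (s * (A + s * B)) ≤ -(γ * s) := by
      intro s hs hs1
      have h1 := hcomb s hs.le hs1
      rw [hSs s] at h1
      have h2 := hpen_ge s
      have h3 : gp * (pen bh - s * (A + s * B)) ≤ gp * pen (bh + s • h) :=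
        mul_le_mul_of_nonneg_left h2 hgppos.le
      rw [mul_sub] at h3
      have h4 : (1 - s) * (g (Sq bh) + gp * pen bh) + s * (g (Sq β) + gp * pen β)
          = (g (Sq bh) + gp * pen bh) - s * γ := by rw [hγ]; ring
      rw [h4] at h1
      nlinarith [h1, h3]
    -- little-o argument
    have hd : HasDerivAt g gp (Sq bh) := by rw [hgpdef]; exact hgderiv (Sq bh) hRpos
    have hlo := hasDerivAt_iff_isLittleO.mp hd
    obtain ⟨C, hC⟩ : ∃ x : ℝ, x = |A| + |B| + 1 := ⟨_, rfl⟩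
    have hCpos : 0 < C := by rw [hC]; positivity
    obtain ⟨ε0, hε0def⟩ : ∃ x : ℝ, x = γ / (2 * C) := ⟨_, rfl⟩
    have hε0 : 0 < ε0 := by rw [hε0def]; exact div_pos hγpos (by positivity)
    have hev := (Asymptotics.isLittleO_iff.mp hlo) hε0
    rw [Metric.eventually_nhds_iff] at hev
    obtain ⟨η, hη, hball⟩ := hev
    obtain ⟨s, hsdef⟩ : ∃ x : ℝ, x = min 1 (η / (2 * C)) := ⟨_, rfl⟩
    have hspos : 0 < s := by rw [hsdef]; exact lt_min one_pos (div_pos hη (by positivity))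
    have hs1 : s ≤ 1 := by rw [hsdef]; exact min_le_left _ _
    obtain ⟨δ, hδ⟩ : ∃ x : ℝ, x = s * (A + s * B) := ⟨_, rfl⟩
    have hδbound : |δ| ≤ s * C := by
      rw [hδ, abs_mul, abs_of_pos hspos]
      refine mul_le_mul_of_nonneg_left ?_ hspos.le
      calc |A + s * B| ≤ |A| + |s * B| := abs_add_le _ _
        _ ≤ |A| + |B| := by
            have e1 : |s * B| = |s| * |B| := abs_mul s B
            have hsabs : |s| ≤ 1 := by rw [abs_of_pos hspos]; exact hs1
            nlinarith [abs_nonneg B]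
        _ ≤ C := by rw [hC]; linarith
    have hδη : |δ| < η := by
      have hs2 : s ≤ η / (2 * C) := by rw [hsdef]; exact min_le_right _ _
      have h5 : s * C ≤ η / 2 := by
        calc s * C ≤ η / (2 * C) * C := mul_le_mul_of_nonneg_right hs2 hCpos.le
          _ = η / 2 := by field_simp
      calc |δ| ≤ s * C := hδbound
        _ ≤ η / 2 := h5
        _ < η := by linarith
    have happ := hball (y := Sq bh + δ) (by rw [Real.dist_eq]; simpa using hδη)
    have happ' : |g (Sq bh + δ) - g (Sq bh) - gp * δ| ≤ ε0 * |δ| := by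
      have e1 : Sq bh + δ - Sq bh = δ := by ring
      rw [Real.norm_eq_abs, Real.norm_eq_abs, e1, smul_eq_mul, mul_comm δ gp] at happ
      exact happ
    have hcontr := hkey s hspos hs1
    rw [← hδ] at hcontr
    have hE : -(ε0 * |δ|) ≤ g (Sq bh + δ) - g (Sq bh) - gp * δ := neg_le_of_abs_le happ'
    have hfin : ε0 * |δ| ≤ γ * s / 2 := by
      calc ε0 * |δ| ≤ ε0 * (s * C) := mul_le_mul_of_nonneg_left hδbound hε0.le
        _ = γ * s / 2 := by rw [hε0def]; field_simp
    have hγs : 0 < γ * s := mul_pos hγpos hspos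
    linarith
  -- conclusion
  refine ⟨lam, hlampos, ⟨bh, hmin_obj⟩, ?_⟩
  intro βhat hβhat j
  have hres_eq : Y - X.mulVec βhat = Y - X.mulVec bh := by
    by_contra hne
    have hvals : objFn g Y X M q lam βhat = objFn g Y X M q lam bh :=
      le_antisymm (hβhat bh) (hmin_obj βhat)
    set z : Fin p → ℝ := (1/2 : ℝ) • bh + (1/2 : ℝ) • βhat with hz
    have hgstrict := hgconv.2 (Set.mem_univ (Y - X.mulVec bh))
      (Set.mem_univ (Y - X.mulVec βhat)) (fun hcc => hne hcc.symm)
      (by norm_num : (0:ℝ) < 1/2) (by norm_num : (0:ℝ) < 1/2) (by norm_num)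
    rw [← hres_combo (1/2) (1/2) (by norm_num) bh βhat] at hgstrict
    have hgz : g (Sq z) < (1/2) * g (Sq bh) + (1/2) * g (Sq βhat) := by
      simp only [hSq, hz]
      simpa only [smul_eq_mul] using hgstrict
    have hpenz : pen z ≤ (1/2) * pen bh + (1/2) * pen βhat :=
      hpen_combo (1/2) (1/2) (by norm_num) (by norm_num) bh βhat
    have hobjz : objFn g Y X M q lam z < objFn g Y X M q lam bh := by
      rw [hobj z, hobj bh]
      have h6 : gp * pen z ≤ gp * ((1/2) * pen bh + (1/2) * pen βhat) :=
        mul_le_mul_of_nonneg_left hpenz hgppos.le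
      have h7 : objFn g Y X M q lam βhat = objFn g Y X M q lam bh := hvals
      rw [hobj βhat, hobj bh] at h7
      nlinarith [hgz, h6]
    exact absurd (hmin_obj z) (not_le.mpr hobjz)
  have hSqeq : sqNorm (Y - X.mulVec βhat) = Sq bh := by
    simp only [hSq]; rw [hres_eq]
  rw [hSqeq, ← hgpdef]
  simp only [hlam]
  rw [div_eq_iff (by positivity : (2:ℝ) * gp ≠ 0)]
  ring
end

section
/- Let β̄ ∈ argmin_{β∈ℝᵖ} { ‖Y − Xβ‖₂² + λ̄‖β‖₁ } be the lasso estimator with tuning parameter λ̄ = 2‖Xᵀε‖_∞. Then (1/n)‖X(β* − β̄)‖₂² ≤ (2/n)‖Xᵀε‖_∞‖β*‖₁. -/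
open Matrix
open scoped BigOperators Classical

/-- Euclidean norm of a vector. -/
noncomputable def l2Norm {n : ℕ} (v : Fin n → ℝ) : ℝ := Real.sqrt (∑ i, (v i) ^ 2)

/-- ℓ₁ norm of a vector. -/
noncomputable def l1Norm {p : ℕ} (v : Fin p → ℝ) : ℝ := ∑ i, |v i|

/-- ℓ_∞ (supremum) norm of a vector. -/
noncomputable def linfNorm {p : ℕ} (v : Fin p → ℝ) : ℝ := ⨆ i, |v i|


lemma sqNorm_eq_dot {n : ℕ} (v : Fin n → ℝ) : sqNorm v = v ⬝ᵥ v := by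
  simp [sqNorm, dotProduct, sq]

lemma sqNorm_sub_smul_s10 {n : ℕ} (u v : Fin n → ℝ) (t : ℝ) :
    sqNorm (u - t • v) = sqNorm u - 2*t*(u ⬝ᵥ v) + t^2 * sqNorm v := by
  simp only [sqNorm, dotProduct, Pi.sub_apply, Pi.smul_apply, smul_eq_mul,
    Finset.mul_sum]
  rw [← Finset.sum_sub_distrib, ← Finset.sum_add_distrib]
  apply Finset.sum_congr rfl
  intro i _
  ring

lemma l1Norm_nonneg {p : ℕ} (v : Fin p → ℝ) : 0 ≤ l1Norm v :=
  Finset.sum_nonneg fun _ _ => abs_nonneg _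

lemma linfNorm_nonneg {p : ℕ} (v : Fin p → ℝ) : 0 ≤ linfNorm v :=
  Real.iSup_nonneg fun _ => abs_nonneg _

lemma abs_le_linfNorm {p : ℕ} (v : Fin p → ℝ) (i : Fin p) : |v i| ≤ linfNorm v := by
  rw [linfNorm]
  exact le_ciSup (f := fun j => |v j|) (Set.Finite.bddAbove (Set.finite_range _)) i

lemma dot_le_l1_linf {p : ℕ} (v g : Fin p → ℝ) :
    |v ⬝ᵥ g| ≤ l1Norm v * linfNorm g := by
  calc |v ⬝ᵥ g| ≤ ∑ i, |v i * g i| := Finset.abs_sum_le_sum_abs _ _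
    _ ≤ ∑ i, |v i| * linfNorm g := by
        apply Finset.sum_le_sum
        intro i _
        rw [abs_mul]
        exact mul_le_mul_of_nonneg_left (abs_le_linfNorm g i) (abs_nonneg _)
    _ = l1Norm v * linfNorm g := by rw [l1Norm, ← Finset.sum_mul]

lemma l1Norm_convex {p : ℕ} (a b : Fin p → ℝ) (t : ℝ) (ht0 : 0 ≤ t) (ht1 : t ≤ 1) :
    l1Norm (a + t • (b - a)) ≤ (1-t) * l1Norm a + t * l1Norm b := by
  simp only [l1Norm, Finset.mul_sum, ← Finset.sum_add_distrib]
  apply Finset.sum_le_sum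
  intro i _
  have : a i + t * (b i - a i) = (1-t) * a i + t * b i := by ring
  simp only [Pi.add_apply, Pi.smul_apply, Pi.sub_apply, smul_eq_mul, this]
  calc |(1-t) * a i + t * b i| ≤ |(1-t) * a i| + |t * b i| := abs_add_le _ _
    _ = (1-t) * |a i| + t * |b i| := by
        rw [abs_mul, abs_mul, abs_of_nonneg (by linarith), abs_of_nonneg ht0]

lemma l1Norm_sub_le {p : ℕ} (a b : Fin p → ℝ) :
    l1Norm (a - b) ≤ l1Norm a + l1Norm b := by
  simp only [l1Norm, ← Finset.sum_add_distrib]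
  exact Finset.sum_le_sum fun i _ => abs_sub (a i) (b i)


/-- Penalty bound for the lasso at the true parameter: with `λ̄ = 2‖Xᵀε‖_∞`,
`(1/n)‖X(β*−β̄)‖₂² ≤ (2/n)‖Xᵀε‖_∞‖β*‖₁`. -/
theorem lasso_bound_at_truth
    {n p : ℕ} (hn : 0 < n)
    (Y ε : Fin n → ℝ) (X : Matrix (Fin n) (Fin p) ℝ) (βstar : Fin p → ℝ)
    (hmodel : Y = X.mulVec βstar + ε)
    (lamBar : ℝ) (hlam : lamBar = 2 * linfNorm (Xᵀ.mulVec ε))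
    (βbar : Fin p → ℝ)
    (hβbar : ∀ β : Fin p → ℝ,
      sqNorm (Y - X.mulVec βbar) + lamBar * l1Norm βbar
        ≤ sqNorm (Y - X.mulVec β) + lamBar * l1Norm β) :
    (1 / n) * sqNorm (X.mulVec (βstar - βbar))
      ≤ (2 / n) * linfNorm (Xᵀ.mulVec ε) * l1Norm βstar := by
  set g : Fin p → ℝ := Xᵀ.mulVec ε with hg
  set S : ℝ := linfNorm g with hS
  set Δ : Fin p → ℝ := βstar - βbar with hΔdef
  set v : Fin n → ℝ := X.mulVec Δ with hv
  set r : Fin n → ℝ := Y - X.mulVec βbar with hr0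
  have hS0 : 0 ≤ S := linfNorm_nonneg g
  have hC0 : 0 ≤ sqNorm v := Finset.sum_nonneg fun i _ => sq_nonneg _
  have hrv : r = v + ε := by
    rw [hr0, hmodel, hv, hΔdef, Matrix.mulVec_sub]
    ext i; simp; ring
  -- key inequality from optimality along the segment
  have key : ∀ t : ℝ, 0 < t → t ≤ 1 →
      2*(r ⬝ᵥ v) ≤ t * sqNorm v + lamBar * (l1Norm βstar - l1Norm βbar) := by
    intro t ht0 ht1
    have h := hβbar (βbar + t • Δ)
    have he : Y - X.mulVec (βbar + t • Δ) = r - t • v := by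
      rw [Matrix.mulVec_add, Matrix.mulVec_smul, hr0]
      ext i; simp; ring
    rw [he, sqNorm_sub_smul_s10] at h
    have hl1 : l1Norm (βbar + t • Δ) ≤ (1-t)*l1Norm βbar + t * l1Norm βstar := by
      have := l1Norm_convex βbar βstar t ht0.le ht1
      rw [← hΔdef] at this
      exact this
    have hlamnn : 0 ≤ lamBar := by rw [hlam]; linarith [linfNorm_nonneg (Xᵀ.mulVec ε)]
    have h2 : t * (2*(r ⬝ᵥ v)) ≤ t * (t * sqNorm v + lamBar * (l1Norm βstar - l1Norm βbar)) := by
      nlinarith [mul_le_mul_of_nonneg_left hl1 hlamnn]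
    exact le_of_mul_le_mul_left h2 ht0
  -- dot product identity
  have hdotid : sqNorm v = (r ⬝ᵥ v) - (Δ ⬝ᵥ g) := by
    have h1 : v ⬝ᵥ ε = Δ ⬝ᵥ g := by
      rw [hg, Matrix.mulVec_transpose, hv]
      rw [dotProduct_comm, Matrix.dotProduct_mulVec, dotProduct_comm]
    have h2 : r ⬝ᵥ v = v ⬝ᵥ v + v ⬝ᵥ ε := by
      rw [hrv, add_dotProduct, dotProduct_comm ε v]
    rw [sqNorm_eq_dot, h2, h1]; ring
  -- bound on the cross term
  have hcross : -(Δ ⬝ᵥ g) ≤ (l1Norm βstar + l1Norm βbar) * S := by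
    have h1 : -(Δ ⬝ᵥ g) ≤ |Δ ⬝ᵥ g| := neg_le_abs _
    have h2 := dot_le_l1_linf Δ g
    have h3 : l1Norm Δ ≤ l1Norm βstar + l1Norm βbar := by
      rw [hΔdef]; exact l1Norm_sub_le _ _
    have h4 : l1Norm Δ * S ≤ (l1Norm βstar + l1Norm βbar) * S :=
      mul_le_mul_of_nonneg_right h3 hS0
    calc -(Δ ⬝ᵥ g) ≤ |Δ ⬝ᵥ g| := h1
      _ ≤ l1Norm Δ * linfNorm g := h2
      _ ≤ (l1Norm βstar + l1Norm βbar) * S := by rw [← hS]; exact h4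
  -- for every t ∈ (0,1]: sqNorm v ≤ (t/2) * sqNorm v + 2 * S * l1Norm βstar
  have main : ∀ t : ℝ, 0 < t → t ≤ 1 →
      sqNorm v ≤ (t/2) * sqNorm v + 2 * S * l1Norm βstar := by
    intro t ht0 ht1
    have hk := key t ht0 ht1
    rw [hlam] at hk
    nlinarith [hk, hcross, hdotid]
  have hfin : sqNorm v ≤ 2 * S * l1Norm βstar := by
    by_contra hcon
    push_neg at hcon
    set η : ℝ := sqNorm v - 2 * S * l1Norm βstar with hη
    have hη0 : 0 < η := by rw [hη]; linarith
    set t : ℝ := min 1 (η / (sqNorm v + 1)) with ht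
    have ht0 : 0 < t := lt_min one_pos (div_pos hη0 (by linarith))
    have ht1 : t ≤ 1 := min_le_left _ _
    have htC : (t/2) * sqNorm v < η := by
      have h1 : t ≤ η / (sqNorm v + 1) := min_le_right _ _
      have h2 : t * (sqNorm v + 1) ≤ η := by
        rw [← div_mul_cancel₀ η (show (sqNorm v + 1) ≠ 0 by linarith)]
        exact mul_le_mul_of_nonneg_right h1 (by linarith)
      nlinarith
    have := main t ht0 ht1
    rw [hη] at htC
    linarith
  -- conclude
  have hn0 : (0:ℝ) ≤ 1 / n := by positivity
  calc (1 / (n:ℝ)) * sqNorm v ≤ (1 / n) * (2 * S * l1Norm βstar) :=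
        mul_le_mul_of_nonneg_left hfin hn0
    _ = (2 / n) * S * l1Norm βstar := by ring
end
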